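/- For each a ∈ {1, 2, 3} and ε ∈ {1, −1}, the eigenspace H_a(ε) is invariant under both φ and φ_a; more precisely φ(H_a(ε)) = H_a(ε) = φ_a(H_a(ε)). -/

import Mathlib

open RealInnerProductSpace

/-- An almost contact metric structure `(φ, ξ, η)` together with an almost contact metric
3-structure `(φ_a, ξ_a, η_a)`, `a ∈ {1,2,3}` (indices mod 3), on a real inner product space `V`,
modelling the structures induced on the tangent space of a real hypersurface in the complex
two-plane Grassmannian `G₂(ℂ^{m+2})` by the Kaehler structure `J` and the quaternionic Kaehler
structure `𝔍`.  Here `η(X) = ⟪ξ, X⟫` and `η_a(X) = ⟪ξ_a, X⟫` are written out via the inner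
product. -/
structure ACMS3 (V : Type*) [NormedAddCommGroup V] [InnerProductSpace ℝ V] where
  phi : V →ₗ[ℝ] V
  xi : V
  phiA : Fin 3 → V →ₗ[ℝ] V
  xiA : Fin 3 → V
  xi_unit : ‖xi‖ = 1
  phi_sq : ∀ X : V, phi (phi X) = -X + ⟪xi, X⟫ • xi
  phi_xi : phi xi = 0
  phi_metric : ∀ X Y : V, ⟪phi X, phi Y⟫ = ⟪X, Y⟫ - ⟪xi, X⟫ * ⟪xi, Y⟫
  xiA_unit : ∀ a, ‖xiA a‖ = 1
  phiA_sq : ∀ a (X : V), phiA a (phiA a X) = -X + ⟪xiA a, X⟫ • xiA a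
  phiA_xiA : ∀ a, phiA a (xiA a) = 0
  phiA_metric : ∀ a (X Y : V),
    ⟪phiA a X, phiA a Y⟫ = ⟪X, Y⟫ - ⟪xiA a, X⟫ * ⟪xiA a, Y⟫
  quat1 : ∀ a (X : V), phiA a (phiA (a + 1) X) - ⟪xiA (a + 1), X⟫ • xiA a = phiA (a + 2) X
  quat2 : ∀ a (X : V),
    phiA (a + 2) X = -(phiA (a + 1) (phiA a X)) + ⟪xiA a, X⟫ • xiA (a + 1)
  quat_xi1 : ∀ a, phiA a (xiA (a + 1)) = xiA (a + 2)
  quat_xi2 : ∀ a, xiA (a + 2) = -(phiA (a + 1) (xiA a))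
  rel : ∀ a (X : V), phiA a (phi X) - ⟪xi, X⟫ • xiA a = phi (phiA a X) - ⟪xiA a, X⟫ • xi
  rel_xi : ∀ a, phi (xiA a) = phiA a xi

variable {V : Type*} [NormedAddCommGroup V] [InnerProductSpace ℝ V]

/-- The endomorphism `θ_a X := φ_a φ X − η(X) ξ_a`. -/
noncomputable def ACMS3.theta (S : ACMS3 V) (a : Fin 3) : V →ₗ[ℝ] V where
  toFun X := S.phiA a (S.phi X) - ⟪S.xi, X⟫ • S.xiA a
  map_add' X Y := by
    simp only [map_add, inner_add_right, add_smul]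
    abel
  map_smul' r X := by
    simp only [map_smul, inner_smul_right, RingHom.id_apply, smul_sub, smul_smul]

/-- `H^⊥ = span{ξ, ξ₁, ξ₂, ξ₃, φξ₁, φξ₂, φξ₃}`. -/
noncomputable def ACMS3.Hperp (S : ACMS3 V) : Submodule ℝ V :=
  Submodule.span ℝ {S.xi, S.xiA 0, S.xiA 1, S.xiA 2,
    S.phi (S.xiA 0), S.phi (S.xiA 1), S.phi (S.xiA 2)}

/-- `H` is the orthogonal complement of `H^⊥` in `V`. -/
noncomputable def ACMS3.H (S : ACMS3 V) : Submodule ℝ V := S.Hperpᗮ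

/-- `H_a(ε)`, the eigenspace of `θ_a` restricted to `H` corresponding to the eigenvalue `ε`. -/
noncomputable def ACMS3.eigenH (S : ACMS3 V) (a : Fin 3) (ε : ℝ) : Submodule ℝ V :=
  S.H ⊓ Module.End.eigenspace (S.theta a) ε

/-- The normal Jacobi operator
`R̂_N X = X + 3η(X)ξ + Σ_a (3η_a(X)ξ_a − η(ξ_a)θ_a X + η_a(φX)φξ_a)`. -/
noncomputable def ACMS3.jacobi (S : ACMS3 V) (X : V) : V :=
  X + (3 * ⟪S.xi, X⟫) • S.xi +
    ∑ a : Fin 3, ((3 * ⟪S.xiA a, X⟫) • S.xiA a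
      - ⟪S.xi, S.xiA a⟫ • S.theta a X
      + ⟪S.xiA a, S.phi X⟫ • S.phi (S.xiA a))

/-!
Both `φ` and `φ_a` are skew-adjoint and map `H^⊥` into itself, hence they map `H = (H^⊥)ᗮ` into
itself. On `H` the forms `η` and `η_a` vanish, so the two expressions
`θ_a = φ_a φ − ξ_a ⊗ η = φ φ_a − ξ ⊗ η_a` show that `θ_a` commutes there with `φ` and with `φ_a`.
Hence `φ` and `φ_a` map every eigenspace `H_a(ε)` into itself, and onto it because
`φ² = φ_a² = −1` on `H`.
-/

/-- The condition `f ξ = 0` is left out: it follows from the other two. -/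
structure IsAlmostContactMetric (f : V →ₗ[ℝ] V) (ξ : V) : Prop where
  norm_eq_one : ‖ξ‖ = 1
  apply_apply : ∀ X, f (f X) = -X + ⟪ξ, X⟫ • ξ
  inner_apply_apply : ∀ X Y, ⟪f X, f Y⟫ = ⟪X, Y⟫ - ⟪ξ, X⟫ * ⟪ξ, Y⟫

namespace IsAlmostContactMetric

variable {f : V →ₗ[ℝ] V} {ξ : V}

theorem inner_apply_eq_zero (h : IsAlmostContactMetric f ξ) (X : V) : ⟪ξ, f X⟫ = 0 := by
  have hξ : ⟪ξ, ξ⟫ = 1 := by rw [real_inner_self_eq_norm_sq, h.norm_eq_one, one_pow]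
  -- computing `‖f (f X)‖²` from either axiom leaves `⟪ξ, f X⟫² = 0`
  have hffX := h.inner_apply_apply (f X) (f X)
  have hfX := h.inner_apply_apply X X
  rw [h.apply_apply] at hffX
  simp only [inner_add_left, inner_add_right, inner_neg_left, inner_neg_right, inner_smul_left,
    inner_smul_right, real_inner_comm ξ X, hξ, RCLike.conj_to_real] at hffX
  have hsq : ⟪ξ, f X⟫ ^ 2 = 0 := by nlinarith
  exact pow_eq_zero_iff two_ne_zero |>.mp hsq

theorem inner_apply_left (h : IsAlmostContactMetric f ξ) (X Y : V) :
    ⟪f X, Y⟫ = -⟪X, f Y⟫ := by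
  have hX := h.inner_apply_apply X (f Y)
  rw [h.apply_apply, h.inner_apply_eq_zero, mul_zero, sub_zero, inner_add_right, inner_neg_right,
    inner_smul_right, real_inner_comm ξ, h.inner_apply_eq_zero, mul_zero, add_zero] at hX
  rw [← hX, neg_neg, real_inner_comm]

theorem orthogonal_le_comap (h : IsAlmostContactMetric f ξ) {K : Submodule ℝ V}
    (hK : K ≤ K.comap f) : Kᗮ ≤ Kᗮ.comap f := fun X hX u hu => by
  rw [← neg_eq_zero, ← h.inner_apply_left, hX _ (hK hu)]

end IsAlmostContactMetric

theorem Submodule.map_eq_self_of_apply_apply_eq_neg {R M : Type*} [Ring R] [AddCommGroup M]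
    [Module R M] {f : M →ₗ[R] M} {W : Submodule R M} (hW : W ≤ W.comap f)
    (hff : ∀ x ∈ W, f (f x) = -x) : W.map f = W :=
  le_antisymm (Submodule.map_le_iff_le_comap.mpr hW) fun x hx =>
    ⟨-f x, neg_mem (hW hx), by rw [map_neg, hff x hx, neg_neg]⟩

theorem Module.End.inf_eigenspace_le_comap {R M : Type*} [CommRing R] [AddCommGroup M]
    [Module R M] {f T : Module.End R M} {K : Submodule R M} (hK : K ≤ K.comap f)
    (hT : ∀ x ∈ K, T (f x) = f (T x)) (μ : R) :
    K ⊓ eigenspace T μ ≤ (K ⊓ eigenspace T μ).comap f := fun x ⟨hxK, hxT⟩ =>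
  ⟨hK hxK, mem_eigenspace_iff.mpr <| by rw [hT x hxK, mem_eigenspace_iff.mp hxT, map_smul]⟩

namespace ACMS3

variable (S : ACMS3 V)

theorem isAlmostContactMetric_phi : IsAlmostContactMetric S.phi S.xi :=
  ⟨S.xi_unit, S.phi_sq, S.phi_metric⟩

theorem isAlmostContactMetric_phiA (a : Fin 3) : IsAlmostContactMetric (S.phiA a) (S.xiA a) :=
  ⟨S.xiA_unit a, S.phiA_sq a, S.phiA_metric a⟩

theorem xi_mem_Hperp : S.xi ∈ S.Hperp := Submodule.subset_span (by simp)

theorem xiA_mem_Hperp (b : Fin 3) : S.xiA b ∈ S.Hperp := by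
  fin_cases b <;> exact Submodule.subset_span (by simp)

theorem phi_xiA_mem_Hperp (b : Fin 3) : S.phi (S.xiA b) ∈ S.Hperp := by
  fin_cases b <;> exact Submodule.subset_span (by simp)

theorem phiA_xiA_mem_Hperp (a b : Fin 3) : S.phiA a (S.xiA b) ∈ S.Hperp := by
  obtain rfl | rfl | rfl : b = a ∨ b = a + 1 ∨ b = a + 2 := by omega
  · rw [S.phiA_xiA]
    exact zero_mem _
  · rw [S.quat_xi1]
    exact S.xiA_mem_Hperp _
  · have h := S.quat_xi2 (a + 2)
    rw [show a + 2 + 2 = a + 1 by omega, show a + 2 + 1 = a by omega] at h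
    rw [← neg_neg (S.phiA a _), ← h]
    exact neg_mem (S.xiA_mem_Hperp _)

theorem Hperp_le_comap_phi : S.Hperp ≤ S.Hperp.comap S.phi := by
  refine Submodule.span_le.mpr ?_
  rintro x (rfl | rfl | rfl | rfl | rfl | rfl | rfl)
  · rw [SetLike.mem_coe, Submodule.mem_comap, S.phi_xi]
    exact zero_mem _
  iterate 3 exact S.phi_xiA_mem_Hperp _
  all_goals
    rw [SetLike.mem_coe, Submodule.mem_comap, S.phi_sq]
    exact add_mem (neg_mem (S.xiA_mem_Hperp _)) (Submodule.smul_mem _ _ S.xi_mem_Hperp)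

theorem Hperp_le_comap_phiA (a : Fin 3) : S.Hperp ≤ S.Hperp.comap (S.phiA a) := by
  refine Submodule.span_le.mpr ?_
  rintro x (rfl | rfl | rfl | rfl | rfl | rfl | rfl)
  · rw [SetLike.mem_coe, Submodule.mem_comap, ← S.rel_xi]
    exact S.phi_xiA_mem_Hperp a
  iterate 3 exact S.phiA_xiA_mem_Hperp a _
  all_goals
    rw [SetLike.mem_coe, Submodule.mem_comap, ← sub_add_cancel (S.phiA a (S.phi _)), S.rel a]
    exact add_mem (sub_mem (S.Hperp_le_comap_phi (S.phiA_xiA_mem_Hperp a _))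
      (Submodule.smul_mem _ _ S.xi_mem_Hperp)) (Submodule.smul_mem _ _ (S.xiA_mem_Hperp a))

theorem H_le_comap_phi : S.H ≤ S.H.comap S.phi :=
  S.isAlmostContactMetric_phi.orthogonal_le_comap S.Hperp_le_comap_phi

theorem H_le_comap_phiA (a : Fin 3) : S.H ≤ S.H.comap (S.phiA a) :=
  (S.isAlmostContactMetric_phiA a).orthogonal_le_comap (S.Hperp_le_comap_phiA a)

theorem inner_eq_zero_of_mem_H {X u : V} (hX : X ∈ S.H) (hu : u ∈ S.Hperp) : ⟪u, X⟫ = 0 :=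
  (Submodule.mem_orthogonal _ _).mp hX u hu

theorem phi_phi_of_mem_H {X : V} (hX : X ∈ S.H) : S.phi (S.phi X) = -X := by
  rw [S.phi_sq, S.inner_eq_zero_of_mem_H hX S.xi_mem_Hperp, zero_smul, add_zero]

theorem phiA_phiA_of_mem_H (a : Fin 3) {X : V} (hX : X ∈ S.H) : S.phiA a (S.phiA a X) = -X := by
  rw [S.phiA_sq, S.inner_eq_zero_of_mem_H hX (S.xiA_mem_Hperp a), zero_smul, add_zero]

theorem theta_apply (a : Fin 3) (X : V) :
    S.theta a X = S.phiA a (S.phi X) - ⟪S.xi, X⟫ • S.xiA a := rfl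

theorem theta_apply' (a : Fin 3) (X : V) :
    S.theta a X = S.phi (S.phiA a X) - ⟪S.xiA a, X⟫ • S.xi := S.rel a X

theorem theta_phi (a : Fin 3) (X : V) :
    S.theta a (S.phi X) =
      S.phi (S.theta a X) + ⟪S.xi, X⟫ • S.phiA a S.xi - ⟪S.xi, S.phiA a X⟫ • S.xi := by
  rw [S.theta_apply, S.isAlmostContactMetric_phi.inner_apply_eq_zero, zero_smul, sub_zero,
    S.phi_sq, S.theta_apply', map_sub, map_smul, S.phi_sq, S.phi_xi, smul_zero, map_add, map_neg,
    map_smul]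
  abel

theorem theta_phiA (a : Fin 3) (X : V) :
    S.theta a (S.phiA a X) =
      S.phiA a (S.theta a X) + ⟪S.xiA a, X⟫ • S.phi (S.xiA a)
        - ⟪S.xiA a, S.phi X⟫ • S.xiA a := by
  rw [S.theta_apply', (S.isAlmostContactMetric_phiA a).inner_apply_eq_zero, zero_smul, sub_zero,
    S.phiA_sq, S.theta_apply, map_sub, map_smul, S.phiA_sq, S.phiA_xiA, smul_zero, map_add,
    map_neg, map_smul]
  abel

theorem theta_phi_of_mem_H (a : Fin 3) {X : V} (hX : X ∈ S.H) :
    S.theta a (S.phi X) = S.phi (S.theta a X) := by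
  rw [S.theta_phi, S.inner_eq_zero_of_mem_H hX S.xi_mem_Hperp,
    S.inner_eq_zero_of_mem_H (S.H_le_comap_phiA a hX) S.xi_mem_Hperp, zero_smul, zero_smul,
    add_zero, sub_zero]

theorem theta_phiA_of_mem_H (a : Fin 3) {X : V} (hX : X ∈ S.H) :
    S.theta a (S.phiA a X) = S.phiA a (S.theta a X) := by
  rw [S.theta_phiA, S.inner_eq_zero_of_mem_H hX (S.xiA_mem_Hperp a),
    S.inner_eq_zero_of_mem_H (S.H_le_comap_phi hX) (S.xiA_mem_Hperp a), zero_smul, zero_smul,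
    add_zero, sub_zero]

end ACMS3

theorem eigenH_phi_invariant_general (S : ACMS3 V) (a : Fin 3) (ε : ℝ) :
    (S.eigenH a ε).map S.phi = S.eigenH a ε ∧
    (S.eigenH a ε).map (S.phiA a) = S.eigenH a ε := by
  constructor
  · refine Submodule.map_eq_self_of_apply_apply_eq_neg ?_ fun x hx => S.phi_phi_of_mem_H hx.1
    exact Module.End.inf_eigenspace_le_comap S.H_le_comap_phi (fun x => S.theta_phi_of_mem_H a) ε
  · refine Submodule.map_eq_self_of_apply_apply_eq_neg ?_ fun x hx => S.phiA_phiA_of_mem_H a hx.1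
    exact Module.End.inf_eigenspace_le_comap (S.H_le_comap_phiA a)
      (fun x => S.theta_phiA_of_mem_H a) ε

/-- For each `a ∈ {1,2,3}` and `ε ∈ {1,−1}`, the eigenspace `H_a(ε)` is invariant
under both `φ` and `φ_a`; more precisely `φ(H_a(ε)) = H_a(ε) = φ_a(H_a(ε))`. -/
theorem eigenH_phi_invariant [FiniteDimensional ℝ V] (S : ACMS3 V) (a : Fin 3)
    (ε : ℝ) (hε : ε = 1 ∨ ε = -1) :
    (S.eigenH a ε).map S.phi = S.eigenH a ε ∧
    (S.eigenH a ε).map (S.phiA a) = S.eigenH a ε :=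
  eigenH_phi_invariant_general S a ε
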